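/- arXiv:1402.1368 — 3 statements merged into one kernel-verified Lean document; each statement's English description precedes it below -/
import Mathlib

section
/- Let Γ be an access structure on a finite set P, and let b, x, a' be three distinct participants such that {b, x} and {x, a'} are members of Γ, while {x} and {b, a'} are unqualified. Then every entropy function f for Γ satisfies f({b}) + f({a'}) + f({x}) ≥ f({b, a'}) + 2. -/
open MeasureTheory Finset
open scoped ENNReal

namespace OnlineSecretSharing

noncomputable section

/-- Shannon entropy of a finitely-valued random variable `X` on the probability
space `(Ω, μ)`. -/
def H {Ω : Type*} [MeasurableSpace Ω] (μ : Measure Ω) {S : Type*} [Fintype S]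
    (X : Ω → S) : ℝ :=
  ∑ s : S, Real.negMulLog (μ (X ⁻¹' {s})).toReal

/-- `Y` is almost surely a function of `X`. -/
def DeterminedBy {Ω : Type*} [MeasurableSpace Ω] (μ : Measure Ω) {S T : Type*}
    (Y : Ω → T) (X : Ω → S) : Prop :=
  ∃ f : S → T, ∀ᵐ ω ∂μ, Y ω = f (X ω)

/-- The (finitely-valued) random variables `X` and `Y` are statistically
independent. -/
def IndepRV {Ω : Type*} [MeasurableSpace Ω] (μ : Measure Ω) {S T : Type*}
    (X : Ω → S) (Y : Ω → T) : Prop :=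
  ∀ (s : S) (t : T), μ (X ⁻¹' {s} ∩ Y ⁻¹' {t}) = μ (X ⁻¹' {s}) * μ (Y ⁻¹' {t})

/-- The joint random variable `(ξ_p)_{p ∈ A}`. -/
def joint {Ω P : Type*} {S : P → Type*} (ξ : (p : P) → Ω → S p) (A : Finset P) :
    Ω → ((p : A) → S (p : P)) :=
  fun ω p => ξ (p : P) ω

/-- An access structure: a nonempty Sperner family of nonempty subsets of the set
`P` of participants; the members of `edges` are the minimal qualified subsets. -/
structure AccessStructure (P : Type*) where
  (edges : Finset (Finset P))
  (nonempty : edges.Nonempty)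
  (mem_nonempty : ∀ E ∈ edges, E.Nonempty)
  (sperner : ∀ E ∈ edges, ∀ F ∈ edges, E ⊆ F → E = F)

/-- A set of participants is qualified if it contains a minimal qualified set. -/
def AccessStructure.Qualified {P : Type*} (Γ : AccessStructure P) (A : Finset P) : Prop :=
  ∃ E ∈ Γ.edges, E ⊆ A

/-- The degree of a participant: the number of hyperedges containing it. -/
def AccessStructure.degree {P : Type*} [DecidableEq P] (Γ : AccessStructure P)
    (p : P) : ℕ :=
  (Γ.edges.filter fun E => p ∈ E).card

/-- The maximal degree of an access structure. -/
def AccessStructure.maxDegree {P : Type*} [Fintype P] [DecidableEq P]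
    (Γ : AccessStructure P) : ℕ :=
  Finset.univ.sup Γ.degree

/-- A (candidate) secret sharing scheme: finite-range random variables on a common
probability space, one secret and one share for each participant. -/
structure Scheme (P : Type) where
  (Ω : Type)
  [ms : MeasurableSpace Ω]
  (μ : Measure Ω)
  (isProb : IsProbabilityMeasure μ)
  (Sec : Type)
  [secFin : Fintype Sec]
  (sec : Ω → Sec)
  (Sh : P → Type)
  [shFin : ∀ p, Fintype (Sh p)]
  (sh : (p : P) → Ω → Sh p)

attribute [instance] Scheme.ms Scheme.secFin Scheme.shFin

/-- A perfect secret sharing scheme realizing `Γ`: the secret has positive entropy,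
qualified sets determine the secret, and the shares of unqualified sets are
independent of the secret. -/
def Scheme.Realizes {P : Type} [Fintype P] [DecidableEq P] (𝒮 : Scheme P)
    (Γ : AccessStructure P) : Prop :=
  0 < H 𝒮.μ 𝒮.sec ∧
  (∀ A : Finset P, Γ.Qualified A → DeterminedBy 𝒮.μ 𝒮.sec (joint 𝒮.sh A)) ∧
  (∀ A : Finset P, ¬ Γ.Qualified A → IndepRV 𝒮.μ (joint 𝒮.sh A) 𝒮.sec)

/-- Complexity of a scheme: (size of the largest share) / (size of the secret). -/
def Scheme.complexity {P : Type} [Fintype P] (𝒮 : Scheme P) : ℝ≥0∞ :=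
  (⨆ p : P, ENNReal.ofReal (H 𝒮.μ (𝒮.sh p))) / ENNReal.ofReal (H 𝒮.μ 𝒮.sec)

/-- The (off-line) complexity `σ(Γ)` of an access structure. -/
def sigmaC {P : Type} [Fintype P] [DecidableEq P] (Γ : AccessStructure P) : ℝ≥0∞ :=
  ⨅ (𝒮 : Scheme P) (_ : 𝒮.Realizes Γ), 𝒮.complexity

/-- An on-line secret sharing scheme: a secret, a family `(ξ_α)_{α ∈ Idx}` of
finite-range random variables, and a dealer strategy `D` assigning an index to
every finite history; a history is a list whose `j`-th entry is the set of
(position-encoded) minimal qualified sets revealed when the `j`-th participant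
arrives. -/
structure OnlineScheme (P : Type) where
  (Ω : Type)
  [ms : MeasurableSpace Ω]
  (μ : Measure Ω)
  (isProb : IsProbabilityMeasure μ)
  (Sec : Type)
  [secFin : Fintype Sec]
  (sec : Ω → Sec)
  (Idx : Type)
  (ShT : Idx → Type)
  [shFin : ∀ α, Fintype (ShT α)]
  (ξ : (α : Idx) → Ω → ShT α)
  (D : List (Finset (Finset ℕ)) → Idx)

attribute [instance] OnlineScheme.ms OnlineScheme.secFin OnlineScheme.shFin

/-- The set of hyperedges (encoded via positions in the arrival order `π`) revealed
when the `j`-th participant arrives: those minimal qualified sets containing the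
`j`-th participant all whose members arrived by time `j`. -/
def hist {P : Type} [Fintype P] [DecidableEq P] (Γ : AccessStructure P) {n : ℕ}
    (π : Fin n ≃ P) (j : Fin n) : Finset (Finset ℕ) :=
  (Γ.edges.filter fun E => π j ∈ E ∧ ∀ p ∈ E, ∃ i : Fin n, i ≤ j ∧ π i = p).image
    fun E => E.image fun p => ((π.symm p : Fin n) : ℕ)

/-- The history seen by the dealer when the `j`-th participant arrives. -/
def histList {P : Type} [Fintype P] [DecidableEq P] (Γ : AccessStructure P) {n : ℕ}
    (π : Fin n ≃ P) (j : Fin n) : List (Finset (Finset ℕ)) :=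
  ((List.finRange n).take (j.1 + 1)).map (hist Γ π)

/-- The assignment of shares produced by an on-line scheme for the arrival
order `π`, as an (off-line) scheme. -/
def OnlineScheme.toScheme {P : Type} [Fintype P] [DecidableEq P] (𝒪 : OnlineScheme P)
    (Γ : AccessStructure P) (π : Fin (Fintype.card P) ≃ P) : Scheme P where
  Ω := 𝒪.Ω
  ms := 𝒪.ms
  μ := 𝒪.μ
  isProb := 𝒪.isProb
  Sec := 𝒪.Sec
  secFin := 𝒪.secFin
  sec := 𝒪.sec
  Sh := fun p => 𝒪.ShT (𝒪.D (histList Γ π (π.symm p)))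
  shFin := fun _ => 𝒪.shFin _
  sh := fun _ => 𝒪.ξ _

/-- An on-line scheme realizes `Γ` if for every arrival order the induced
assignment of shares is a perfect secret sharing scheme realizing `Γ`. -/
def OnlineScheme.Realizes {P : Type} [Fintype P] [DecidableEq P] (𝒪 : OnlineScheme P)
    (Γ : AccessStructure P) : Prop :=
  ∀ π : Fin (Fintype.card P) ≃ P, (𝒪.toScheme Γ π).Realizes Γ

/-- Complexity of an on-line scheme. -/
def OnlineScheme.complexity {P : Type} (𝒪 : OnlineScheme P) : ℝ≥0∞ :=
  (⨆ α : 𝒪.Idx, ENNReal.ofReal (H 𝒪.μ (𝒪.ξ α))) / ENNReal.ofReal (H 𝒪.μ 𝒪.sec)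

/-- The on-line complexity `o(Γ)` of an access structure. -/
def oC {P : Type} [Fintype P] [DecidableEq P] (Γ : AccessStructure P) : ℝ≥0∞ :=
  ⨅ (𝒪 : OnlineScheme P) (_ : 𝒪.Realizes Γ), 𝒪.complexity

/-- An entropy function for `Γ`: rules (a)–(e) of the entropy method. -/
def IsEntropyFn {P : Type} [DecidableEq P] (Γ : AccessStructure P)
    (f : Finset P → ℝ) : Prop :=
  f ∅ = 0 ∧
  (∀ A B : Finset P, A ⊆ B → f A ≤ f B) ∧
  (∀ A B : Finset P, f (A ∩ B) + f (A ∪ B) ≤ f A + f B) ∧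
  (∀ A B : Finset P, A ⊆ B → ¬ Γ.Qualified A → Γ.Qualified B → f A + 1 ≤ f B) ∧
  (∀ A B : Finset P, Γ.Qualified A → Γ.Qualified B → ¬ Γ.Qualified (A ∩ B) →
    f (A ∩ B) + f (A ∪ B) + 1 ≤ f A + f B)

/-- The access structure associated with a graph: the minimal qualified sets are
exactly the edges. -/
def graphAS {P : Type} [Fintype P] [DecidableEq P] (G : SimpleGraph P)
    (hne : ∃ a b, G.Adj a b) : AccessStructure P :=
  letI : DecidableRel G.Adj := Classical.decRel _
  { edges := ((Finset.univ : Finset (P × P)).filter fun q => G.Adj q.1 q.2).image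
      fun q => {q.1, q.2}
    nonempty := by
      obtain ⟨a, b, hab⟩ := hne
      exact ⟨{a, b}, Finset.mem_image.2
        ⟨(a, b), Finset.mem_filter.2 ⟨Finset.mem_univ _, hab⟩, rfl⟩⟩
    mem_nonempty := by
      intro E hE
      rcases Finset.mem_image.1 hE with ⟨q, _, rfl⟩
      exact ⟨q.1, by simp⟩
    sperner := by
      intro E hE F hF hEF
      rcases Finset.mem_image.1 hE with ⟨q, hq, rfl⟩
      rcases Finset.mem_image.1 hF with ⟨r, hr, rfl⟩
      have hq' : G.Adj q.1 q.2 := (Finset.mem_filter.1 hq).2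
      have hr' : G.Adj r.1 r.2 := (Finset.mem_filter.1 hr).2
      refine Finset.eq_of_subset_of_card_le hEF ?_
      rw [Finset.card_pair hr'.ne, Finset.card_pair hq'.ne] }

/-- The path `P_{m+2}` on the `m + 2` vertices `0, 1, …, m+1` (in this order),
as an access structure: the minimal qualified sets are the pairs `{i, i+1}`. -/
def pathAS (m : ℕ) : AccessStructure (Fin (m + 2)) where
  edges := (Finset.univ : Finset (Fin (m + 1))).image fun i => {i.castSucc, i.succ}
  nonempty := ⟨_, Finset.mem_image.2 ⟨0, Finset.mem_univ _, rfl⟩⟩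
  mem_nonempty := by
    intro E hE
    rcases Finset.mem_image.1 hE with ⟨i, _, rfl⟩
    exact ⟨_, Finset.mem_insert_self _ _⟩
  sperner := by
    intro E hE F hF hEF
    rcases Finset.mem_image.1 hE with ⟨i, _, rfl⟩
    rcases Finset.mem_image.1 hF with ⟨j, _, rfl⟩
    have h1 := hEF (Finset.mem_insert_self _ _)
    have h2 := hEF (Finset.mem_insert_of_mem (Finset.mem_singleton_self _))
    rw [Finset.mem_insert, Finset.mem_singleton] at h1 h2
    rw [Fin.ext_iff, Fin.ext_iff] at h1 h2
    simp only [Fin.coe_castSucc, Fin.val_succ] at h1 h2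
    have : i = j := Fin.ext (by omega)
    subst this; rfl

/-- The cycle `C_{m+3}` on the `m + 3` vertices `0, 1, …, m+2` (in this cyclic
order), as an access structure: the minimal qualified sets are the pairs
`{i, i+1}` together with `{0, m+2}`. -/
def cycleAS (m : ℕ) : AccessStructure (Fin (m + 3)) where
  edges := ((Finset.univ : Finset (Fin (m + 2))).image fun i => {i.castSucc, i.succ}) ∪
    {({0, Fin.last (m + 2)} : Finset (Fin (m + 3)))}
  nonempty := ⟨_, Finset.mem_union_right _ (Finset.mem_singleton_self _)⟩
  mem_nonempty := by
    intro E hE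
    rcases Finset.mem_union.1 hE with hE | hE
    · rcases Finset.mem_image.1 hE with ⟨i, _, rfl⟩
      exact ⟨_, Finset.mem_insert_self _ _⟩
    · rw [Finset.mem_singleton.1 hE]
      exact ⟨_, Finset.mem_insert_self _ _⟩
  sperner := by
    intro E hE F hF hEF
    rcases Finset.mem_union.1 hE with hE | hE <;>
      rcases Finset.mem_union.1 hF with hF | hF
    · rcases Finset.mem_image.1 hE with ⟨i, _, rfl⟩
      rcases Finset.mem_image.1 hF with ⟨j, _, rfl⟩
      have h1 := hEF (Finset.mem_insert_self _ _)
      have h2 := hEF (Finset.mem_insert_of_mem (Finset.mem_singleton_self _))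
      rw [Finset.mem_insert, Finset.mem_singleton] at h1 h2
      rw [Fin.ext_iff, Fin.ext_iff] at h1 h2
      simp only [Fin.coe_castSucc, Fin.val_succ] at h1 h2
      have : i = j := Fin.ext (by omega)
      subst this; rfl
    · exfalso
      rcases Finset.mem_image.1 hE with ⟨i, _, rfl⟩
      rw [Finset.mem_singleton.1 hF] at hEF
      have h1 := hEF (Finset.mem_insert_self _ _)
      have h2 := hEF (Finset.mem_insert_of_mem (Finset.mem_singleton_self _))
      rw [Finset.mem_insert, Finset.mem_singleton] at h1 h2
      rw [Fin.ext_iff, Fin.ext_iff] at h1 h2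
      simp only [Fin.coe_castSucc, Fin.val_succ, Fin.val_zero, Fin.val_last] at h1 h2
      have := i.2
      omega
    · exfalso
      rcases Finset.mem_image.1 hF with ⟨j, _, rfl⟩
      rw [Finset.mem_singleton.1 hE] at hEF
      have h1 := hEF (Finset.mem_insert_self _ _)
      have h2 := hEF (Finset.mem_insert_of_mem (Finset.mem_singleton_self _))
      rw [Finset.mem_insert, Finset.mem_singleton] at h1 h2
      rw [Fin.ext_iff, Fin.ext_iff] at h1 h2
      simp only [Fin.coe_castSucc, Fin.val_succ, Fin.val_zero, Fin.val_last] at h1 h2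
      have := j.2
      omega
    · rw [Finset.mem_singleton.1 hE, Finset.mem_singleton.1 hF]

/-- The vertex set of the graph `G(d,m)`: a center (`none`), `d` star leaves
(`some (inl i)`) and `m` isolated vertices (`some (inr j)`). -/
abbrev StarVertex (d m : ℕ) : Type := Option (Fin d ⊕ Fin m)

/-- The center of the star in the graph `G(d,m)`. -/
def starCenter (d m : ℕ) : StarVertex d m := none

/-- The graph `G(d,m)`: a star with `d` edges together with `m` isolated
vertices, as an access structure. -/
def starAS (d m : ℕ) (hd : 1 ≤ d) : AccessStructure (StarVertex d m) where
  edges := (Finset.univ : Finset (Fin d)).image fun i =>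
    {starCenter d m, some (Sum.inl i)}
  nonempty := ⟨_, Finset.mem_image.2 ⟨⟨0, by omega⟩, Finset.mem_univ _, rfl⟩⟩
  mem_nonempty := by
    intro E hE
    rcases Finset.mem_image.1 hE with ⟨i, _, rfl⟩
    exact ⟨_, Finset.mem_insert_self _ _⟩
  sperner := by
    intro E hE F hF hEF
    rcases Finset.mem_image.1 hE with ⟨i, _, rfl⟩
    rcases Finset.mem_image.1 hF with ⟨j, _, rfl⟩
    have h2 := hEF (Finset.mem_insert_of_mem (Finset.mem_singleton_self _))
    rw [Finset.mem_insert, Finset.mem_singleton] at h2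
    rcases h2 with h | h
    · exact absurd h (by simp [starCenter])
    · simp only [Option.some.injEq, Sum.inl.injEq] at h
      subst h; rfl

/-- The substructure of `Γ` induced by `S` (assuming it contains at least one
hyperedge), as an access structure on the subtype `S`. -/
def inducedAS {P : Type} [DecidableEq P] (Γ : AccessStructure P) (S : Finset P)
    (h : ∃ E ∈ Γ.edges, E ⊆ S) : AccessStructure {x : P // x ∈ S} where
  edges := (Γ.edges.filter fun E => E ⊆ S).image fun E => E.subtype fun x => x ∈ S
  nonempty := by
    obtain ⟨E, hE, hES⟩ := h
    exact ⟨_, Finset.mem_image.2 ⟨E, Finset.mem_filter.2 ⟨hE, hES⟩, rfl⟩⟩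
  mem_nonempty := by
    intro E' hE'
    rcases Finset.mem_image.1 hE' with ⟨E, hE, rfl⟩
    have hE1 := (Finset.mem_filter.1 hE).1
    have hES := (Finset.mem_filter.1 hE).2
    obtain ⟨a, ha⟩ := Γ.mem_nonempty E hE1
    exact ⟨⟨a, hES ha⟩, Finset.mem_subtype.2 ha⟩
  sperner := by
    intro E' hE' F' hF' hEF
    rcases Finset.mem_image.1 hE' with ⟨E, hE, rfl⟩
    rcases Finset.mem_image.1 hF' with ⟨F, hF, rfl⟩
    have hE1 := (Finset.mem_filter.1 hE).1
    have hF1 := (Finset.mem_filter.1 hF).1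
    have hES := (Finset.mem_filter.1 hE).2
    have hsub : E ⊆ F := by
      intro a ha
      exact Finset.mem_subtype.1 (hEF (Finset.mem_subtype.2 ha : (⟨a, hES ha⟩ :
        {x : P // x ∈ S}) ∈ E.subtype fun x => x ∈ S))
    rw [Γ.sperner E hE1 F hF1 hsub]

/-- If `{b,x}` and `{x,a'}` are minimal qualified sets of `Γ`
while `{x}` and `{b,a'}` are unqualified, then every entropy function `f` for
`Γ` satisfies `f({b}) + f({a'}) + f({x}) ≥ f({b,a'}) + 2`. -/
theorem statement8 {P : Type} [Fintype P] [DecidableEq P] (Γ : AccessStructure P)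
    (b x a' : P) (hbx : b ≠ x) (hba : b ≠ a') (hxa : x ≠ a')
    (h1 : ({b, x} : Finset P) ∈ Γ.edges) (h2 : ({x, a'} : Finset P) ∈ Γ.edges)
    (h3 : ¬ Γ.Qualified {x}) (h4 : ¬ Γ.Qualified ({b, a'} : Finset P))
    (f : Finset P → ℝ) (hf : IsEntropyFn Γ f) :
    f ({b, a'} : Finset P) + 2 ≤ f {b} + f {a'} + f {x} := by
  obtain ⟨hf0, hmono, hsub, hd, he⟩ := hf
  have hinter : ({b, x} : Finset P) ∩ ({x, a'} : Finset P) = {x} := by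
    ext p
    simp only [Finset.mem_inter, Finset.mem_insert, Finset.mem_singleton]
    constructor
    · rintro ⟨hp1 | hp1, hp2 | hp2⟩ <;> simp_all
    · rintro rfl; exact ⟨Or.inr rfl, Or.inl rfl⟩
  have hunion : ({b, x} : Finset P) ∪ ({x, a'} : Finset P) = {b, x, a'} := by
    ext p
    simp only [Finset.mem_union, Finset.mem_insert, Finset.mem_singleton]
    tauto
  have hq1 : Γ.Qualified ({b, x} : Finset P) := ⟨_, h1, subset_rfl⟩
  have hq2 : Γ.Qualified ({x, a'} : Finset P) := ⟨_, h2, subset_rfl⟩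
  have hqbig : Γ.Qualified ({b, x, a'} : Finset P) := by
    refine ⟨_, h1, ?_⟩
    intro p hp
    simp only [Finset.mem_insert, Finset.mem_singleton] at hp ⊢
    tauto
  have hE := he ({b, x} : Finset P) ({x, a'} : Finset P) hq1 hq2 (by rw [hinter]; exact h3)
  rw [hinter, hunion] at hE
  have hD := hd ({b, a'} : Finset P) ({b, x, a'} : Finset P)
    (by intro p hp; simp only [Finset.mem_insert, Finset.mem_singleton] at hp ⊢; tauto)
    h4 hqbig
  have hs1 := hsub ({b} : Finset P) ({x} : Finset P)
  have hs2 := hsub ({x} : Finset P) ({a'} : Finset P)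
  have hi1 : ({b} : Finset P) ∩ ({x} : Finset P) = ∅ :=
    Finset.singleton_inter_of_notMem (by simp [hbx])
  have hi2 : ({x} : Finset P) ∩ ({a'} : Finset P) = ∅ :=
    Finset.singleton_inter_of_notMem (by simp [hxa])
  have hu1 : ({b} : Finset P) ∪ ({x} : Finset P) = {b, x} := rfl
  have hu2 : ({x} : Finset P) ∪ ({a'} : Finset P) = {x, a'} := rfl
  rw [hi1, hu1, hf0] at hs1
  rw [hi2, hu2, hf0] at hs2
  linarith

end

end OnlineSecretSharing
end

section
/- For every access structure Γ on a finite set of participants with maximal degree d = d(Γ), there exists an on-line secret sharing scheme realizing Γ with complexity at most d; consequently o(Γ) ≤ d(Γ). -/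
open MeasureTheory Finset
open scoped ENNReal

namespace OnlineSecretSharing

noncomputable section

/-! Every participant `p` holds `d(Γ)` bits, one slot for each edge `E ∋ p`. Slots are
assigned first-fit: edges are ordered by completion time (the arrival of their last member,
ties broken by an injective encoding) and the slot of `p` in `E` is the number of earlier edges
through `p`. This is computable by the dealer from the history when `E` is completed, and
distinct edges through `p` get distinct slots below `deg p ≤ d(Γ)`. When the last member of `E`
arrives, its slot for `E` holds the secret plus the random bits the other members hold in their
slots for `E`; every other slot is a fresh uniform bit. So the slots of the members of an edge
sum to the secret. For an unqualified `A`, pick in every edge a member outside `A`: adding `g`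
to the secret and to those members' bits for their edges is a translation of the uniform sample
space that fixes every share of `A` and shifts the secret by `g`, whence independence. Shares
take `2^d` values and the secret is a uniform bit, so the complexity is at most `d`. -/

open ProbabilityTheory

lemma sum_negMulLog_le_log_card {S : Type*} [Fintype S] {q : S → ℝ} (h0 : ∀ s, 0 ≤ q s)
    (h1 : ∑ s, q s = 1) : ∑ s, Real.negMulLog (q s) ≤ Real.log (Fintype.card S) := by
  have hS : (0 : ℝ) < Fintype.card S := by
    rcases isEmpty_or_nonempty S with hS | hS
    · simp at h1
    · exact_mod_cast Fintype.card_pos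
  have hJensen := Real.concaveOn_negMulLog.le_map_sum (t := univ)
    (w := fun _ => (Fintype.card S : ℝ)⁻¹) (p := q) (fun _ _ => by positivity)
    (by simp [hS.ne']) (fun s _ => Set.mem_Ici.2 (h0 s))
  simp only [smul_eq_mul, ← Finset.mul_sum, h1, mul_one] at hJensen
  rw [Real.negMulLog, Real.log_inv, neg_mul_neg] at hJensen
  exact le_of_mul_le_mul_left hJensen (inv_pos.2 hS)

lemma H_le_log_card {Ω S : Type*} [MeasurableSpace Ω] (μ : Measure Ω) [IsProbabilityMeasure μ]
    [Fintype S] {X : Ω → S} (hX : ∀ s, MeasurableSet (X ⁻¹' {s})) :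
    H μ X ≤ Real.log (Fintype.card S) := by
  refine sum_negMulLog_le_log_card (fun _ => ENNReal.toReal_nonneg) ?_
  rw [← ENNReal.toReal_sum (fun s _ => measure_ne_top μ _),
    sum_measure_preimage_singleton _ fun s _ => hX s, coe_univ, Set.preimage_univ,
    measure_univ, ENNReal.toReal_one]

section Translation

variable {Ω S T : Type*} [Fintype Ω] [AddGroup T] [DecidableEq S] [DecidableEq T]
  {X : Ω → S} {Y : Ω → T} {e : T → Ω → Ω}

lemma card_filter_le_of_translate (he : ∀ g, Function.Injective (e g))
    (hX : ∀ g ω, X (e g ω) = X ω) (hY : ∀ g ω, Y (e g ω) = Y ω + g) (a : S) (t t' : T) :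
    #{ω | X ω = a ∧ Y ω = t} ≤ #{ω | X ω = a ∧ Y ω = t'} := by
  refine card_le_card_of_injOn (e (-t + t')) (fun ω hω => ?_) (he _).injOn
  simp only [coe_filter, mem_univ, true_and, Set.mem_ofPred_eq] at hω ⊢
  rw [hX, hY, hω.2, ← add_assoc, add_neg_cancel, zero_add]
  exact ⟨hω.1, rfl⟩

variable [Fintype T]

lemma card_mul_card_filter_of_translate (he : ∀ g, Function.Injective (e g))
    (hX : ∀ g ω, X (e g ω) = X ω) (hY : ∀ g ω, Y (e g ω) = Y ω + g) (a : S) (t : T) :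
    Fintype.card T * #{ω | X ω = a ∧ Y ω = t} = #{ω | X ω = a} := by
  rw [eq_comm, card_eq_sum_card_fiberwise (f := Y) (t := univ) fun _ _ => mem_univ _]
  simp only [filter_filter]
  rw [sum_congr rfl fun t' _ => le_antisymm (card_filter_le_of_translate he hX hY a t' t)
    (card_filter_le_of_translate he hX hY a t t'), sum_const, card_univ,
    smul_eq_mul]

variable [MeasurableSpace Ω] [MeasurableSingletonClass Ω]

lemma uniformOn_univ_setOf (p : Ω → Prop) [DecidablePred p] :
    uniformOn Set.univ {ω | p ω} = #{ω | p ω} / Fintype.card Ω := by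
  rw [uniformOn_univ, ← coe_filter_univ, Measure.count_apply_finset]

lemma uniformOn_preimage_of_translate (he : ∀ g, Function.Injective (e g))
    (hX : ∀ g ω, X (e g ω) = X ω) (hY : ∀ g ω, Y (e g ω) = Y ω + g) (a : S) (t : T) :
    uniformOn Set.univ (X ⁻¹' {a}) =
      Fintype.card T * uniformOn Set.univ (X ⁻¹' {a} ∩ Y ⁻¹' {t}) := by
  change uniformOn _ {ω | X ω = a} = _ * uniformOn _ {ω | X ω = a ∧ Y ω = t}
  rw [uniformOn_univ_setOf, uniformOn_univ_setOf, ← mul_div_assoc,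
    ← card_mul_card_filter_of_translate he hX hY a t, Nat.cast_mul]

lemma uniformOn_preimage_singleton_of_translate [Nonempty Ω] (he : ∀ g, Function.Injective (e g))
    (hY : ∀ g ω, Y (e g ω) = Y ω + g) (t : T) :
    uniformOn Set.univ (Y ⁻¹' {t}) = (Fintype.card T : ℝ≥0∞)⁻¹ := by
  have h := uniformOn_preimage_of_translate (X := fun _ => ()) he (fun _ _ => rfl) hY () t
  rw [Set.preimage_const_of_mem (Set.mem_singleton ()), Set.univ_inter, measure_univ] at h
  exact ENNReal.eq_inv_of_mul_eq_one_left (by rw [mul_comm, h])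

lemma indepRV_uniformOn_of_translate [Nonempty Ω] (he : ∀ g, Function.Injective (e g))
    (hX : ∀ g ω, X (e g ω) = X ω) (hY : ∀ g ω, Y (e g ω) = Y ω + g) :
    IndepRV (uniformOn Set.univ) X Y := by
  intro a t
  rw [uniformOn_preimage_of_translate he hX hY a t,
    uniformOn_preimage_singleton_of_translate he hY t, mul_comm, ← mul_assoc,
    ENNReal.inv_mul_cancel (by simp) (ENNReal.natCast_ne_top _), one_mul]

lemma H_uniformOn_of_translate [Nonempty Ω] (he : ∀ g, Function.Injective (e g))
    (hY : ∀ g ω, Y (e g ω) = Y ω + g) :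
    H (uniformOn Set.univ) Y = Real.log (Fintype.card T) := by
  have hT : (Fintype.card T : ℝ) ≠ 0 := by simp
  simp only [H, uniformOn_preimage_singleton_of_translate he hY, sum_const, card_univ,
    nsmul_eq_mul, ENNReal.toReal_inv, ENNReal.toReal_natCast, Real.negMulLog, Real.log_inv]
  field_simp

end Translation

lemma OnlineScheme.complexity_le {P : Type} (𝒪 : OnlineScheme P) {c : ℕ}
    (h : ∀ α, H 𝒪.μ (𝒪.ξ α) ≤ c * H 𝒪.μ 𝒪.sec) : 𝒪.complexity ≤ c := by
  refine ENNReal.div_le_of_le_mul (iSup_le fun α => ?_)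
  rw [← ENNReal.ofReal_natCast, ← ENNReal.ofReal_mul (Nat.cast_nonneg c)]
  exact ENNReal.ofReal_le_ofReal (h α)

lemma oC_le_complexity {P : Type} [Fintype P] [DecidableEq P] {Γ : AccessStructure P}
    {𝒪 : OnlineScheme P} (h : 𝒪.Realizes Γ) : oC Γ ≤ 𝒪.complexity :=
  iInf₂_le 𝒪 h

section ArrivalOrder

variable {P : Type} {n : ℕ} (π : Fin n ≃ P)

def arrival (p : P) : ℕ := π.symm p

lemma arrival_injective : Function.Injective (arrival π) :=
  fun _ _ h => π.symm.injective (Fin.val_injective h)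

def arrivals (E : Finset P) : Finset ℕ := E.image (arrival π)

def completion (E : Finset P) : ℕ := E.sup (arrival π)

variable {π} {E : Finset P}

lemma exists_arrival_eq_completion (hE : E.Nonempty) :
    ∃ p ∈ E, arrival π p = completion π E :=
  let ⟨p, hp, h⟩ := E.exists_mem_eq_sup hE (arrival π)
  ⟨p, hp, h.symm⟩

lemma mem_of_completion_eq_arrival (hE : E.Nonempty) {q : P}
    (h : completion π E = arrival π q) : q ∈ E := by
  obtain ⟨p, hp, hpc⟩ := exists_arrival_eq_completion hE
  rwa [arrival_injective π (hpc.trans h)] at hp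

lemma completion_eq_iff (hE : E.Nonempty) (j : Fin n) :
    completion π E = j ↔ π j ∈ E ∧ ∀ p ∈ E, ∃ i : Fin n, i ≤ j ∧ π i = p := by
  constructor
  · intro h
    refine ⟨mem_of_completion_eq_arrival hE (by rw [h]; simp [arrival]), fun p hp => ?_⟩
    refine ⟨π.symm p, ?_, π.apply_symm_apply p⟩
    rw [Fin.le_iff_val_le_val, ← h]
    exact le_sup (f := arrival π) hp
  · rintro ⟨hj, hle⟩
    refine le_antisymm (Finset.sup_le fun p hp => ?_)
      (by simpa [arrival, completion] using le_sup (f := arrival π) hj)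
    obtain ⟨i, hij, rfl⟩ := hle p hp
    simpa [arrival] using hij

variable (π)

def record (E : Finset P) : ℕ × Finset ℕ := (completion π E, arrivals π E)

lemma record_injective : Function.Injective (record π) :=
  fun _ _ h => Finset.image_injective (arrival_injective π) (congrArg Prod.snd h)

lemma mem_hist_iff [Fintype P] [DecidableEq P] (Γ : AccessStructure P) (j : Fin n) {F : Finset ℕ} :
    F ∈ hist Γ π j ↔ ∃ E ∈ Γ.edges, completion π E = j ∧ arrivals π E = F := by
  simp only [hist, mem_image, mem_filter]
  constructor
  · rintro ⟨E, ⟨hE, hj⟩, rfl⟩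
    exact ⟨E, hE, (completion_eq_iff (Γ.mem_nonempty E hE) j).2 hj, rfl⟩
  · rintro ⟨E, hE, hj, rfl⟩
    exact ⟨E, ⟨hE, (completion_eq_iff (Γ.mem_nonempty E hE) j).1 hj⟩, rfl⟩

end ArrivalOrder

section Slots

def stamp (x : ℕ × Finset ℕ) : ℕ ×ₗ ℕ := toLex (x.1, Encodable.encode x.2)

lemma stamp_injective : Function.Injective stamp := fun x y h => by
  simp only [stamp, EmbeddingLike.apply_eq_iff_eq, Prod.mk.injEq] at h
  exact Prod.ext h.1 (Encodable.encode_injective h.2)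

lemma fst_le_of_stamp_lt {x y : ℕ × Finset ℕ} (h : stamp x < stamp y) : x.1 ≤ y.1 :=
  (Prod.Lex.toLex_lt_toLex'.1 h).1

lemma card_filter_lt_lt_card_filter_lt {α β : Type*} [LinearOrder β] {s : Finset α}
    {f : α → β} {x y : α} (hx : x ∈ s) (h : f x < f y) :
    #{z ∈ s | f z < f x} < #{z ∈ s | f z < f y} := by
  refine card_lt_card ((ssubset_iff_of_subset fun z hz => ?_).2 ⟨x, ?_, ?_⟩)
  · rw [mem_filter] at hz ⊢
    exact ⟨hz.1, hz.2.trans h⟩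
  · exact mem_filter.2 ⟨hx, h⟩
  · simp

lemma injOn_card_filter_lt {α β : Type*} [LinearOrder β] {s : Finset α} {f : α → β}
    (hf : Set.InjOn f s) : Set.InjOn (fun x => #{z ∈ s | f z < f x}) s := by
  intro x hx y hy h
  by_contra hne
  rcases lt_or_gt_of_ne (hf.ne hx hy hne) with hlt | hlt
  · exact (card_filter_lt_lt_card_filter_lt hx hlt).ne h
  · exact (card_filter_lt_lt_card_filter_lt hy hlt).ne' h

def slot (R : Finset (ℕ × Finset ℕ)) (i : ℕ) (x : ℕ × Finset ℕ) : ℕ :=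
  #{y ∈ R | i ∈ y.2 ∧ stamp y < stamp x}

variable {R : Finset (ℕ × Finset ℕ)} {i : ℕ} {x y : ℕ × Finset ℕ}

lemma slot_eq (R : Finset (ℕ × Finset ℕ)) (i : ℕ) (x : ℕ × Finset ℕ) :
    slot R i x = #{y ∈ {y ∈ R | i ∈ y.2} | stamp y < stamp x} := by
  rw [slot, filter_filter]

lemma slot_lt_card (hx : x ∈ R) (hi : i ∈ x.2) : slot R i x < #{y ∈ R | i ∈ y.2} := by
  rw [slot_eq]
  exact card_lt_card (filter_ssubset.2 ⟨x, mem_filter.2 ⟨hx, hi⟩, lt_irrefl _⟩)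

lemma slot_injOn (hx : x ∈ R) (hy : y ∈ R) (hix : i ∈ x.2) (hiy : i ∈ y.2)
    (h : slot R i x = slot R i y) : x = y := by
  rw [slot_eq, slot_eq] at h
  exact injOn_card_filter_lt stamp_injective.injOn (mem_filter.2 ⟨hx, hix⟩)
    (mem_filter.2 ⟨hy, hiy⟩) h

lemma slot_filter_fst_le {J : ℕ} (hx : x.1 ≤ J) : slot {y ∈ R | y.1 ≤ J} i x = slot R i x := by
  rw [slot, slot, filter_filter]
  exact congrArg card (filter_congr fun y _ =>
    ⟨fun h => h.2, fun h => ⟨(fst_le_of_stamp_lt h.2).trans hx, h⟩⟩)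

end Slots

section EdgeSlots

variable {P : Type} (Γ : AccessStructure P) {n : ℕ} (π : Fin n ≃ P)

def edgeRecords : Finset (ℕ × Finset ℕ) := Γ.edges.image (record π)

def edgeSlot (p : P) (E : Finset P) : ℕ :=
  slot (edgeRecords Γ π) (arrival π p) (record π E)

variable {Γ π} {p : P} {E E' : Finset P}

lemma edgeSlot_lt_maxDegree [Fintype P] [DecidableEq P] (hE : E ∈ Γ.edges) (hp : p ∈ E) :
    edgeSlot Γ π p E < Γ.maxDegree :=
  calc edgeSlot Γ π p E < #{y ∈ edgeRecords Γ π | arrival π p ∈ y.2} :=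
        slot_lt_card (mem_image_of_mem _ hE) (mem_image_of_mem _ hp)
    _ ≤ Γ.degree p := by
        rw [edgeRecords, filter_image]
        refine card_image_le.trans (card_le_card fun F hF => ?_)
        rw [mem_filter] at hF ⊢
        exact ⟨hF.1, (arrival_injective π).mem_finset_image.1 hF.2⟩
    _ ≤ Γ.maxDegree := le_sup (mem_univ p)

lemma edgeSlot_injOn (hE : E ∈ Γ.edges) (hE' : E' ∈ Γ.edges) (hp : p ∈ E) (hp' : p ∈ E')
    (h : edgeSlot Γ π p E = edgeSlot Γ π p E') : E = E' :=
  record_injective π (slot_injOn (mem_image_of_mem _ hE) (mem_image_of_mem _ hE')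
    (mem_image_of_mem _ hp) (mem_image_of_mem _ hp') h)

end EdgeSlots

section Dealer

def records (α : List (Finset (Finset ℕ))) : Finset (ℕ × Finset ℕ) :=
  (range α.length).biUnion fun t => (α.getD t ∅).image (Prod.mk t)

lemma mem_records {α : List (Finset (Finset ℕ))} {x : ℕ × Finset ℕ} :
    x ∈ records α ↔ x.1 < α.length ∧ x.2 ∈ α.getD x.1 ∅ := by
  obtain ⟨t, F⟩ := x
  simp [records]

/-- The newcomer after the history `α` arrives at position `α.length - 1`. -/
def completedAt (α : List (Finset (Finset ℕ))) (k : ℕ) : Finset (ℕ × Finset ℕ) :=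
  {x ∈ records α | x.1 = α.length - 1 ∧ slot (records α) (α.length - 1) x = k}

def dealerShare (α : List (Finset (Finset ℕ))) (s : ZMod 2) (r : ℕ → ℕ → ZMod 2) (k : ℕ) :
    ZMod 2 :=
  if completedAt α k = ∅ then r (α.length - 1) k
  else s + ∑ x ∈ completedAt α k, ∑ i ∈ x.2.erase (α.length - 1), r i (slot (records α) i x)

variable {P : Type} [Fintype P] [DecidableEq P] {Γ : AccessStructure P} {n : ℕ}
  {π : Fin n ≃ P}

lemma length_histList (J : Fin n) : (histList Γ π J).length = J + 1 := by
  simp only [histList, List.length_map, List.length_take, List.length_finRange]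
  omega

lemma getD_histList {J : Fin n} {t : ℕ} (ht : t ≤ J) :
    (histList Γ π J).getD t ∅ = hist Γ π ⟨t, by omega⟩ := by
  simp [histList, show t < J + 1 by omega]

lemma records_histList (J : Fin n) :
    records (histList Γ π J) = {x ∈ edgeRecords Γ π | x.1 ≤ (J : ℕ)} := by
  ext ⟨t, F⟩
  simp only [mem_records, length_histList, mem_filter, edgeRecords, mem_image, record,
    Prod.mk.injEq]
  constructor
  · rintro ⟨ht, hF⟩
    rw [getD_histList (by omega), mem_hist_iff] at hF
    obtain ⟨E, hE, hc, hF⟩ := hF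
    exact ⟨⟨E, hE, hc, hF⟩, by omega⟩
  · rintro ⟨⟨E, hE, rfl, rfl⟩, ht⟩
    rw [getD_histList ht, mem_hist_iff]
    exact ⟨by omega, E, hE, rfl, rfl⟩

lemma length_histList_sub_one (q : P) :
    (histList Γ π (π.symm q)).length - 1 = arrival π q := by
  rw [length_histList, Nat.add_sub_cancel]
  rfl

lemma completedAt_histList (q : P) (k : ℕ) :
    completedAt (histList Γ π (π.symm q)) k =
      {E ∈ Γ.edges | completion π E = arrival π q ∧ edgeSlot Γ π q E = k}.image (record π) := by
  rw [completedAt, length_histList_sub_one, records_histList, filter_filter]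
  calc _ = {x ∈ edgeRecords Γ π |
        x.1 = arrival π q ∧ slot (edgeRecords Γ π) (arrival π q) x = k} :=
        filter_congr fun x _ => by
          constructor
          · rintro ⟨hle, hc, hk⟩
            exact ⟨hc, by rwa [slot_filter_fst_le hle] at hk⟩
          · rintro ⟨hc, hk⟩
            have hle : x.1 ≤ ((π.symm q : Fin n) : ℕ) := hc.le
            exact ⟨hle, hc, by rwa [slot_filter_fst_le hle]⟩
    _ = _ := by rw [edgeRecords, filter_image]; rfl

variable {q p : P} {E : Finset P}

lemma dealerShare_of_completion (hE : E ∈ Γ.edges) (hc : completion π E = arrival π q)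
    (s : ZMod 2) (r : ℕ → ℕ → ZMod 2) :
    dealerShare (histList Γ π (π.symm q)) s r (edgeSlot Γ π q E) =
      s + ∑ p ∈ E.erase q, r (arrival π p) (edgeSlot Γ π p E) := by
  have hq : q ∈ E := mem_of_completion_eq_arrival (Γ.mem_nonempty E hE) hc
  have hC : completedAt (histList Γ π (π.symm q)) (edgeSlot Γ π q E) = {record π E} := by
    rw [completedAt_histList, ← image_singleton]
    refine congrArg _ (eq_singleton_iff_unique_mem.2 ⟨mem_filter.2 ⟨hE, hc, rfl⟩, fun E' hE' => ?_⟩)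
    obtain ⟨hE'Γ, hc', hk⟩ := mem_filter.1 hE'
    exact edgeSlot_injOn hE'Γ hE (mem_of_completion_eq_arrival (Γ.mem_nonempty E' hE'Γ) hc') hq hk
  have hle : (record π E).1 ≤ ((π.symm q : Fin n) : ℕ) := hc.le
  rw [dealerShare, hC, if_neg (singleton_ne_empty _), sum_singleton, length_histList_sub_one,
    records_histList]
  simp_rw [slot_filter_fst_le hle]
  rw [record, arrivals, ← image_erase (arrival_injective π),
    sum_image fun _ _ _ _ h => arrival_injective π h]
  rfl

lemma dealerShare_of_forall_ne {k : ℕ}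
    (hk : ∀ E ∈ Γ.edges, completion π E = arrival π q → edgeSlot Γ π q E ≠ k)
    (s : ZMod 2) (r : ℕ → ℕ → ZMod 2) :
    dealerShare (histList Γ π (π.symm q)) s r k = r (arrival π q) k := by
  rw [dealerShare, if_pos, length_histList_sub_one]
  rw [completedAt_histList, image_eq_empty, filter_eq_empty_iff]
  exact fun E hE h => hk E hE h.1 h.2

lemma dealerShare_edgeSlot_of_ne (hE : E ∈ Γ.edges) (hp : p ∈ E)
    (hc : completion π E ≠ arrival π p) (s : ZMod 2) (r : ℕ → ℕ → ZMod 2) :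
    dealerShare (histList Γ π (π.symm p)) s r (edgeSlot Γ π p E) =
      r (arrival π p) (edgeSlot Γ π p E) :=
  dealerShare_of_forall_ne (fun E' hE' hc' h => hc <| by
    rwa [← edgeSlot_injOn hE' hE (mem_of_completion_eq_arrival (Γ.mem_nonempty E' hE') hc') hp h])
    s r

end Dealer

section Marks

variable {P : Type} (Γ : AccessStructure P) {n : ℕ} (π : Fin n ≃ P)

def marks (w : Finset P → P) (i k : ℕ) : ZMod 2 :=
  if ∃ E ∈ Γ.edges, arrival π (w E) = i ∧ edgeSlot Γ π (w E) E = k then 1 else 0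

variable {Γ π} {w : Finset P → P}

lemma marks_ne_zero [Fintype P] [DecidableEq P] (hw : ∀ E ∈ Γ.edges, w E ∈ E) {i k : ℕ}
    (h : marks Γ π w i k ≠ 0) : i < n ∧ k < Γ.maxDegree := by
  obtain ⟨E, hE, rfl, rfl⟩ : ∃ E ∈ Γ.edges, arrival π (w E) = i ∧ edgeSlot Γ π (w E) E = k := by
    by_contra hne
    exact h (if_neg hne)
  exact ⟨(π.symm (w E)).isLt, edgeSlot_lt_maxDegree hE (hw E hE)⟩

lemma marks_edgeSlot [DecidableEq P] (hw : ∀ E ∈ Γ.edges, w E ∈ E) {p : P} {E : Finset P}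
    (hE : E ∈ Γ.edges) (hp : p ∈ E) :
    marks Γ π w (arrival π p) (edgeSlot Γ π p E) = if p = w E then 1 else 0 := by
  by_cases hpw : p = w E
  · subst hpw
    exact (if_pos ⟨E, hE, rfl, rfl⟩).trans (if_pos rfl).symm
  · refine (if_neg ?_).trans (if_neg hpw).symm
    rintro ⟨E', hE', ha, hs⟩
    obtain rfl := arrival_injective π ha
    exact hpw (by rw [edgeSlot_injOn hE' hE (hw E' hE') hp hs])

lemma marks_arrival_eq_zero {A : Finset P} (hwA : ∀ E ∈ Γ.edges, w E ∉ A) {q : P} (hq : q ∈ A)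
    (k : ℕ) : marks Γ π w (arrival π q) k = 0 :=
  if_neg fun ⟨E, hE, ha, _⟩ => hwA E hE (arrival_injective π ha ▸ hq)

lemma dealerShare_add_marks [Fintype P] [DecidableEq P] (hw : ∀ E ∈ Γ.edges, w E ∈ E) {A : Finset P}
    (hwA : ∀ E ∈ Γ.edges, w E ∉ A) {q : P} (hq : q ∈ A) (s g : ZMod 2) (r : ℕ → ℕ → ZMod 2)
    (k : ℕ) : dealerShare (histList Γ π (π.symm q)) (s + g) (r + g • marks Γ π w) k =
      dealerShare (histList Γ π (π.symm q)) s r k := by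
  by_cases hk : ∃ E ∈ Γ.edges, completion π E = arrival π q ∧ edgeSlot Γ π q E = k
  · obtain ⟨E, hE, hc, rfl⟩ := hk
    have hwq : w E ∈ E.erase q := mem_erase.2 ⟨fun h => hwA E hE (h ▸ hq), hw E hE⟩
    rw [dealerShare_of_completion hE hc, dealerShare_of_completion hE hc]
    simp only [Pi.add_apply, Pi.smul_apply, smul_eq_mul, sum_add_distrib, ← mul_sum]
    rw [sum_congr rfl fun p hp => marks_edgeSlot hw hE (mem_of_mem_erase hp), sum_ite_eq',
      if_pos hwq, mul_one, add_add_add_comm, CharTwo.add_self_eq_zero, add_zero]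
  · simp only [not_exists, not_and] at hk
    rw [dealerShare_of_forall_ne hk, dealerShare_of_forall_ne hk, Pi.add_apply, Pi.add_apply,
      Pi.smul_apply, Pi.smul_apply, marks_arrival_eq_zero hwA hq, smul_zero, add_zero]

end Marks

section FirstFit

/-- Reads a table at arbitrary natural indices, with junk value `0` outside its range. -/
def extendTable {n d : ℕ} (r : Fin n → Fin d → ZMod 2) (i k : ℕ) : ZMod 2 :=
  if h : i < n ∧ k < d then r ⟨i, h.1⟩ ⟨k, h.2⟩ else 0

variable {n d : ℕ}

lemma extendTable_add (r r' : Fin n → Fin d → ZMod 2) :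
    extendTable (r + r') = extendTable r + extendTable r' := by
  funext i k
  simp only [extendTable, Pi.add_apply]
  split_ifs <;> simp

lemma extendTable_smul (g : ZMod 2) (r : Fin n → Fin d → ZMod 2) :
    extendTable (g • r) = g • extendTable r := by
  funext i k
  simp only [extendTable, Pi.smul_apply]
  split_ifs <;> simp

lemma extendTable_of_ne_zero {f : ℕ → ℕ → ZMod 2} (hf : ∀ i k, f i k ≠ 0 → i < n ∧ k < d) :
    extendTable (fun (i : Fin n) (k : Fin d) => f i k) = f := by
  funext i k
  unfold extendTable
  split_ifs with h
  · rfl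
  · by_contra hne
    exact h (hf i k (Ne.symm hne))

abbrev Outcome (n d : ℕ) : Type := ZMod 2 × (Fin n → Fin d → ZMod 2)

lemma H_uniformOn_fst : H (uniformOn Set.univ : Measure (Outcome n d)) Prod.fst = Real.log 2 := by
  have := H_uniformOn_of_translate (Ω := Outcome n d) (Y := Prod.fst)
    (e := fun g ω => ω + (g, 0)) (fun _ => add_left_injective _) (fun _ _ => rfl)
  rwa [ZMod.card, Nat.cast_ofNat] at this

variable {P : Type} [Fintype P] [DecidableEq P]

def firstFit (Γ : AccessStructure P) : OnlineScheme P where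
  Ω := Outcome (Fintype.card P) Γ.maxDegree
  μ := uniformOn Set.univ
  isProb := inferInstance
  Sec := ZMod 2
  sec := Prod.fst
  Idx := List (Finset (Finset ℕ))
  ShT := fun _ => Fin Γ.maxDegree → ZMod 2
  ξ := fun α ω k => dealerShare α ω.1 (extendTable ω.2) k
  D := id

variable (Γ : AccessStructure P) (π : Fin (Fintype.card P) ≃ P)

def firstFitShare (p : P) (ω : Outcome (Fintype.card P) Γ.maxDegree) :
    Fin Γ.maxDegree → ZMod 2 :=
  fun k => dealerShare (histList Γ π (π.symm p)) ω.1 (extendTable ω.2) k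

variable {Γ}

lemma determinedBy_firstFitShare {A : Finset P} (hA : Γ.Qualified A) :
    DeterminedBy (uniformOn Set.univ) Prod.fst (joint (firstFitShare Γ π) A) := by
  obtain ⟨E, hE, hEA⟩ := hA
  obtain ⟨q, hq, hqc⟩ := exists_arrival_eq_completion (π := π) (Γ.mem_nonempty E hE)
  refine ⟨fun v => ∑ p ∈ E.attach,
    v ⟨p, hEA p.2⟩ ⟨edgeSlot Γ π p E, edgeSlot_lt_maxDegree hE p.2⟩, ae_of_all _ fun ω => ?_⟩
  change ω.1 = ∑ p ∈ E.attach,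
    dealerShare (histList Γ π (π.symm p)) ω.1 (extendTable ω.2) (edgeSlot Γ π p E)
  rw [sum_attach E fun p =>
      dealerShare (histList Γ π (π.symm p)) ω.1 (extendTable ω.2) (edgeSlot Γ π p E),
    ← add_sum_erase E _ hq, dealerShare_of_completion hE hqc.symm,
    sum_congr rfl fun p hp => dealerShare_edgeSlot_of_ne hE (mem_of_mem_erase hp)
      (fun h => ne_of_mem_erase hp (arrival_injective π (h.symm.trans hqc.symm))) _ _,
    add_assoc, CharTwo.add_self_eq_zero, add_zero]

lemma indepRV_firstFitShare {A : Finset P} (hA : ¬ Γ.Qualified A) :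
    IndepRV (uniformOn Set.univ) (joint (firstFitShare Γ π) A) Prod.fst := by
  classical
  have hwit : ∀ E ∈ Γ.edges, ∃ p ∈ E, p ∉ A := fun E hE => not_subset.1 fun h => hA ⟨E, hE, h⟩
  obtain ⟨E₀, hE₀⟩ := Γ.nonempty
  have : Nonempty P := (Γ.mem_nonempty E₀ hE₀).to_subtype.map Subtype.val
  choose! w hw hwA using hwit
  let δ : Fin (Fintype.card P) → Fin Γ.maxDegree → ZMod 2 := fun i k => marks Γ π w i k
  refine indepRV_uniformOn_of_translate (Y := Prod.fst) (e := fun g ω => ω + (g, g • δ))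
    (fun _ => add_left_injective _) (fun g ω => funext fun q => funext fun k => ?_)
    (fun _ _ => rfl)
  change dealerShare (histList Γ π (π.symm q)) (ω.1 + g) (extendTable (ω.2 + g • δ)) k =
    dealerShare (histList Γ π (π.symm q)) ω.1 (extendTable ω.2) k
  rw [extendTable_add, extendTable_smul, extendTable_of_ne_zero fun _ _ => marks_ne_zero hw]
  exact dealerShare_add_marks hw hwA q.2 _ _ _ _

end FirstFit

section Realization

variable {P : Type} [Fintype P] [DecidableEq P] (Γ : AccessStructure P)

lemma firstFit_realizes : (firstFit Γ).Realizes Γ := fun π =>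
  ⟨H_uniformOn_fst.symm ▸ Real.log_pos one_lt_two,
    fun _ hA => determinedBy_firstFitShare π hA, fun _ hA => indepRV_firstFitShare π hA⟩

lemma firstFit_complexity_le : (firstFit Γ).complexity ≤ Γ.maxDegree := by
  refine OnlineScheme.complexity_le _ fun α => ?_
  change H (uniformOn Set.univ : Measure (Outcome (Fintype.card P) Γ.maxDegree)) _ ≤
    _ * H (uniformOn Set.univ : Measure (Outcome (Fintype.card P) Γ.maxDegree)) Prod.fst
  calc _ ≤ Real.log (Fintype.card (Fin Γ.maxDegree → ZMod 2)) :=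
        H_le_log_card _ fun _ => .of_discrete
    _ = _ := by
        rw [H_uniformOn_fst, Fintype.card_fun, ZMod.card, Fintype.card_fin, Nat.cast_pow,
          Real.log_pow, Nat.cast_ofNat]

end Realization

/-- Theorem 1.1, the first-fit scheme. Every access structure
`Γ` is realized by an on-line secret sharing scheme of complexity at most the
maximal degree `d(Γ)`; in particular `o(Γ) ≤ d(Γ)`. -/
theorem statement9 {P : Type} [Fintype P] [DecidableEq P] (Γ : AccessStructure P) :
    (∃ 𝒪 : OnlineScheme P, 𝒪.Realizes Γ ∧
        𝒪.complexity ≤ (Γ.maxDegree : ℝ≥0∞)) ∧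
      oC Γ ≤ (Γ.maxDegree : ℝ≥0∞) :=
  ⟨⟨firstFit Γ, firstFit_realizes Γ, firstFit_complexity_le Γ⟩,
    (oC_le_complexity (firstFit_realizes Γ)).trans (firstFit_complexity_le Γ)⟩

end

end OnlineSecretSharing
end

section
/- Let Γ be a fully symmetric access structure, i.e., every isomorphism between two induced substructures of Γ extends to an automorphism of Γ. Then the on-line complexity equals the off-line complexity: o(Γ) = σ(Γ). -/
open MeasureTheory Finset
open scoped ENNReal

namespace OnlineSecretSharing

noncomputable section

/-- `Γ` is fully symmetric: every isomorphism between two of its induced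
substructures extends to an automorphism of `Γ`. -/
def FullySymmetric {P : Type} [Fintype P] [DecidableEq P]
    (Γ : AccessStructure P) : Prop :=
  ∀ (S₁ S₂ : Finset P) (φ : P → P), Set.BijOn φ ↑S₁ ↑S₂ →
    (∀ E ∈ Γ.edges, E ⊆ S₁ → E.image φ ∈ Γ.edges) →
    (∀ F ∈ Γ.edges, F ⊆ S₂ → ∃ E ∈ Γ.edges, E ⊆ S₁ ∧ E.image φ = F) →
    ∃ μ : Equiv.Perm P, (∀ p ∈ S₁, μ p = φ p) ∧
      ∀ E : Finset P, E ∈ Γ.edges ↔ E.image μ ∈ Γ.edges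

/-!
One inequality holds for every `Γ`: fixing one arrival order turns an on-line scheme into a
scheme with no larger shares. For the other, the dealer of the on-line scheme hands out shares of
a given scheme, choosing after each arrival a virtual arrival order that produces the history seen
so far and extends its earlier choices. Such an order exists by full symmetry: the isomorphism
between the participants arrived so far and their virtual counterparts extends to an automorphism
of `Γ`, which carries the actual order to one with the same history agreeing with all earlier
choices. Hence the shares handed out are those of the given scheme relabelled by an automorphism
of `Γ`, which realizes `Γ` with the same complexity.
-/

lemma AccessStructure.nonempty_participants {P : Type} (Γ : AccessStructure P) : Nonempty P := by
  obtain ⟨E, hE⟩ := Γ.nonempty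
  obtain ⟨p, -⟩ := Γ.mem_nonempty E hE
  exact ⟨p⟩

variable {P : Type} [DecidableEq P]

namespace AccessStructure

def IsAutomorphism (Γ : AccessStructure P) (μ : Equiv.Perm P) : Prop :=
  ∀ E : Finset P, E ∈ Γ.edges ↔ E.image μ ∈ Γ.edges

variable {Γ : AccessStructure P} {μ : Equiv.Perm P}

lemma IsAutomorphism.symm (hμ : Γ.IsAutomorphism μ) : Γ.IsAutomorphism μ.symm := by
  intro E
  rw [hμ (E.image μ.symm), Finset.image_image, Equiv.self_comp_symm, Finset.image_id]

lemma IsAutomorphism.qualified_image (hμ : Γ.IsAutomorphism μ) {A : Finset P}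
    (hA : Γ.Qualified A) : Γ.Qualified (A.image μ) := by
  obtain ⟨E, hE, hEA⟩ := hA
  exact ⟨E.image μ, (hμ E).1 hE, Finset.image_subset_image hEA⟩

lemma IsAutomorphism.qualified_image_iff (hμ : Γ.IsAutomorphism μ) {A : Finset P} :
    Γ.Qualified (A.image μ) ↔ Γ.Qualified A := by
  refine ⟨fun hA => ?_, hμ.qualified_image⟩
  simpa [Finset.image_image] using hμ.symm.qualified_image hA

lemma IsAutomorphism.image_edges (hμ : Γ.IsAutomorphism μ) :
    Γ.edges.image (fun E => E.image μ) = Γ.edges := by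
  ext F
  refine ⟨fun hF => ?_, fun hF => Finset.mem_image.2 ⟨F.image μ.symm, (hμ.symm F).1 hF, ?_⟩⟩
  · obtain ⟨E, hE, rfl⟩ := Finset.mem_image.1 hF
    exact (hμ E).1 hE
  · simp [Finset.image_image]

end AccessStructure

section Transfer

variable {Ω S S' T : Type*} [MeasurableSpace Ω] {μ : Measure Ω} {X : Ω → S} {Y : Ω → T}

lemma DeterminedBy.comp_equiv (h : DeterminedBy μ Y X) (g : S ≃ S') :
    DeterminedBy μ Y (g ∘ X) := by
  obtain ⟨f, hf⟩ := h
  exact ⟨f ∘ g.symm, by simpa using hf⟩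

lemma IndepRV.comp_equiv (h : IndepRV μ X Y) (g : S ≃ S') : IndepRV μ (g ∘ X) Y := by
  intro s t
  have hpre : (g ∘ X) ⁻¹' {s} = X ⁻¹' {g.symm s} := by
    ext ω
    simp [Equiv.eq_symm_apply]
  rw [hpre]
  exact h _ t

end Transfer

def Scheme.relabel (𝒮 : Scheme P) (φ : P → P) : Scheme P :=
  { 𝒮 with
    Sh := fun p => 𝒮.Sh (φ p)
    shFin := fun p => 𝒮.shFin (φ p)
    sh := fun p => 𝒮.sh (φ p) }

lemma Scheme.joint_relabel (𝒮 : Scheme P) (μ : Equiv.Perm P) (A : Finset P) :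
    ∃ g : ((q : A.image μ) → 𝒮.Sh q) ≃ ((p : A) → 𝒮.Sh (μ p)),
      joint (𝒮.relabel μ).sh A = g ∘ joint 𝒮.sh (A.image μ) :=
  ⟨Equiv.piCongrLeft' _ (Equiv.subtypeEquiv μ fun _ => μ.injective.mem_finset_image.symm).symm,
    rfl⟩

lemma Scheme.Realizes.relabel [Fintype P] {Γ : AccessStructure P} {𝒮 : Scheme P} (h𝒮 : 𝒮.Realizes Γ)
    {μ : Equiv.Perm P} (hμ : Γ.IsAutomorphism μ) : (𝒮.relabel μ).Realizes Γ := by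
  obtain ⟨hpos, hqual, hunqual⟩ := h𝒮
  refine ⟨hpos, fun A hA => ?_, fun A hA => ?_⟩ <;> obtain ⟨g, hg⟩ := 𝒮.joint_relabel μ A <;>
    rw [hg]
  · exact (hqual _ (hμ.qualified_image hA)).comp_equiv g
  · exact (hunqual _ (mt hμ.qualified_image_iff.1 hA)).comp_equiv g

section History

variable [Fintype P] (Γ : AccessStructure P) {n : ℕ}

lemma histList_length (π : Fin n ≃ P) (j : Fin n) : (histList Γ π j).length = j.1 + 1 := by
  simp only [histList, List.length_map, List.length_take, List.length_finRange]
  omega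

lemma histList_take (π : Fin n ≃ P) {i j : Fin n} (hij : i ≤ j) :
    (histList Γ π j).take (i.1 + 1) = histList Γ π i := by
  rw [histList, ← List.map_take, List.take_take, Nat.min_eq_left (Nat.succ_le_succ hij),
    histList]

lemma hist_eq_of_histList_eq {π π' : Fin n ≃ P} {j : Fin n}
    (h : histList Γ π j = histList Γ π' j) {i : Fin n} (hij : i ≤ j) :
    hist Γ π i = hist Γ π' i := by
  refine List.map_inj_left.1 h i (List.mem_take_iff_getElem.2 ⟨i.1, ?_, by simp⟩)
  simp only [List.length_finRange]
  omega

variable {Γ}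

lemma hist_trans {μ : Equiv.Perm P} (hμ : Γ.IsAutomorphism μ) (π : Fin n ≃ P) (j : Fin n) :
    hist Γ (π.trans μ) j = hist Γ π j := by
  rw [hist, ← hμ.image_edges, Finset.filter_image, Finset.image_image, hist]
  congr 1 <;> ext E <;> simp

lemma histList_trans {μ : Equiv.Perm P} (hμ : Γ.IsAutomorphism μ) (π : Fin n ≃ P)
    (j : Fin n) : histList Γ (π.trans μ) j = histList Γ π j :=
  List.map_congr_left fun i _ => hist_trans hμ π i

end History

section Symmetry

variable [Fintype P] {Γ : AccessStructure P} {n : ℕ}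

lemma image_mem_edges_of_hist_eq {π π' : Fin n ≃ P} {j : Fin n}
    (hh : ∀ i ≤ j, hist Γ π i = hist Γ π' i) {E : Finset P} (hE : E ∈ Γ.edges)
    (hEj : ∀ p ∈ E, π.symm p ≤ j) : E.image (π.symm.trans π') ∈ Γ.edges := by
  have hne : E.Nonempty := Γ.mem_nonempty E hE
  obtain ⟨p₀, hp₀E, hp₀⟩ := Finset.exists_mem_eq_sup' hne π.symm
  -- `E` is revealed at the arrival of its last member `p₀`
  have hrev : E.image (fun p => ((π.symm p : Fin n) : ℕ)) ∈ hist Γ π' (π.symm p₀) := by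
    rw [← hh _ (hp₀ ▸ Finset.sup'_le hne _ hEj)]
    refine Finset.mem_image_of_mem _ (Finset.mem_filter.2 ⟨hE, ?_, fun p hp => ?_⟩)
    · rwa [Equiv.apply_symm_apply]
    · exact ⟨π.symm p, hp₀ ▸ Finset.le_sup' _ hp, π.apply_symm_apply p⟩
  obtain ⟨F, hF, hFE⟩ := Finset.mem_image.1 hrev
  have hFE' : F.image π'.symm = E.image π.symm := by
    apply Finset.image_injective Fin.val_injective
    simpa only [Finset.image_image, Function.comp_def] using hFE
  have : F = E.image (π.symm.trans π') :=
    calc F = (F.image π'.symm).image π' := by simp [Finset.image_image]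
      _ = E.image (π.symm.trans π') := by rw [hFE', Finset.image_image]; rfl
  exact this ▸ (Finset.mem_filter.1 hF).1

lemma FullySymmetric.exists_isAutomorphism_of_histList_eq (hΓ : FullySymmetric Γ)
    {π π' : Fin (Fintype.card P) ≃ P} {j : Fin (Fintype.card P)}
    (h : histList Γ π j = histList Γ π' j) :
    ∃ μ : Equiv.Perm P, Γ.IsAutomorphism μ ∧ ∀ i ≤ j, μ (π i) = π' i := by
  have hh : ∀ i ≤ j, hist Γ π i = hist Γ π' i := fun i => hist_eq_of_histList_eq Γ h
  set σ : Equiv.Perm P := π.symm.trans π'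
  set S : Finset P := Finset.univ.filter fun p => π.symm p ≤ j
  have hσS : ∀ q ∈ S.image σ, π'.symm q ≤ j := by
    intro q hq
    obtain ⟨p, hp, rfl⟩ := Finset.mem_image.1 hq
    simpa [σ, S] using hp
  have hbij : Set.BijOn σ S (S.image σ) := by
    rw [Finset.coe_image]
    exact σ.injective.injOn.bijOn_image
  have hfwd : ∀ E ∈ Γ.edges, E ⊆ S → E.image σ ∈ Γ.edges := fun E hE hES =>
    image_mem_edges_of_hist_eq hh hE fun p hp => (Finset.mem_filter.1 (hES hp)).2
  have hbwd : ∀ F ∈ Γ.edges, F ⊆ S.image σ →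
      ∃ E ∈ Γ.edges, E ⊆ S ∧ E.image σ = F := by
    intro F hF hFS
    refine ⟨F.image (π'.symm.trans π), ?_, ?_, ?_⟩
    · exact image_mem_edges_of_hist_eq (fun i hi => (hh i hi).symm) hF
        fun q hq => hσS q (hFS hq)
    · intro p hp
      obtain ⟨q, hq, rfl⟩ := Finset.mem_image.1 hp
      simpa [S] using hσS q (hFS hq)
    · simp [σ, Finset.image_image, Function.comp_def]
  obtain ⟨μ, hμσ, hμ⟩ := hΓ S (S.image σ) σ hbij hfwd hbwd
  refine ⟨μ, hμ, fun i hi => ?_⟩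
  rw [hμσ (π i) (by simpa [S] using hi)]
  simp [σ]

end Symmetry

section Dealer

variable [Fintype P] (Γ : AccessStructure P)

/-- `π` produces the history `L`, and at each earlier arrival `i` it agrees with the order
`c i` chosen for the prefix of `L` of length `i + 1`. -/
def CompatibleOrder (L : List (Finset (Finset ℕ)))
    (c : (i : ℕ) → i + 1 < L.length → Fin (Fintype.card P) ≃ P)
    (π : Fin (Fintype.card P) ≃ P) : Prop :=
  (∃ j, histList Γ π j = L) ∧ ∀ (i : Fin (Fintype.card P)) (hi : i.1 + 1 < L.length), π i = c i hi i

noncomputable def pickOrder (L : List (Finset (Finset ℕ)))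
    (c : (i : ℕ) → i + 1 < L.length → Fin (Fintype.card P) ≃ P) : Fin (Fintype.card P) ≃ P :=
  open Classical in
  if h : ∃ π, CompatibleOrder Γ L c π then h.choose else (Fintype.equivFin P).symm

lemma pickOrder_spec {L : List (Finset (Finset ℕ))}
    {c : (i : ℕ) → i + 1 < L.length → Fin (Fintype.card P) ≃ P}
    (h : ∃ π, CompatibleOrder Γ L c π) : CompatibleOrder Γ L c (pickOrder Γ L c) := by
  rw [pickOrder, dif_pos h]
  exact h.choose_spec

/-- The arrival order the dealer pretends to see after the history `L`. -/
noncomputable def dealerOrder (L : List (Finset (Finset ℕ))) : Fin (Fintype.card P) ≃ P :=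
  pickOrder Γ L fun i _ => dealerOrder (L.take (i + 1))
termination_by L.length
decreasing_by simp only [List.length_take]; omega

/-- The newcomer gets the share of the participant at the same position of `dealerOrder Γ L`;
the `% card` only makes the index a `Fin`, it is the identity on genuine histories. -/
noncomputable def dealer [Nonempty P] (L : List (Finset (Finset ℕ))) : P :=
  dealerOrder Γ L ⟨(L.length - 1) % Fintype.card P, Nat.mod_lt _ Fintype.card_pos⟩

variable {Γ}

lemma dealerOrder_histList_of_exists {π : Fin (Fintype.card P) ≃ P} {j : Fin (Fintype.card P)}
    (h : ∃ π', CompatibleOrder Γ (histList Γ π j)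
      (fun i _ => dealerOrder Γ ((histList Γ π j).take (i + 1))) π') :
    histList Γ (dealerOrder Γ (histList Γ π j)) j = histList Γ π j ∧
      ∀ i ≤ j, dealerOrder Γ (histList Γ π j) i = dealerOrder Γ (histList Γ π i) i := by
  obtain ⟨⟨j', hj'⟩, hprev⟩ := pickOrder_spec Γ h
  rw [← dealerOrder] at hj' hprev
  obtain rfl : j' = j := by
    have := congrArg List.length hj'
    rw [histList_length, histList_length] at this
    exact Fin.ext (by omega)
  refine ⟨hj', fun i hi => hi.lt_or_eq.elim (fun hlt => ?_) (fun heq => by rw [heq])⟩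
  exact (hprev i (by rw [histList_length]; omega)).trans
    (congrArg (fun L => dealerOrder Γ L i) (histList_take Γ π hi))

lemma FullySymmetric.dealerOrder_histList (hΓ : FullySymmetric Γ)
    (π : Fin (Fintype.card P) ≃ P) (j : Fin (Fintype.card P)) :
    histList Γ (dealerOrder Γ (histList Γ π j)) j = histList Γ π j ∧
      ∀ i ≤ j, dealerOrder Γ (histList Γ π j) i = dealerOrder Γ (histList Γ π i) i := by
  obtain ⟨k, hk⟩ := j
  induction k with
  | zero =>
    refine dealerOrder_histList_of_exists ⟨π, ⟨_, rfl⟩, fun i hi => ?_⟩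
    simp only [histList_length] at hi
    omega
  | succ k ih =>
    -- move `π` by an automorphism onto the dealer's order for the previous history
    obtain ⟨hsame, hprev⟩ := ih (by omega)
    obtain ⟨μ, hμ, hμπ⟩ := hΓ.exists_isAutomorphism_of_histList_eq hsame.symm
    refine dealerOrder_histList_of_exists ⟨π.trans μ, ⟨_, histList_trans hμ π _⟩, fun i hi => ?_⟩
    simp only [histList_length] at hi
    have hik : i ≤ ⟨k, by omega⟩ := Fin.le_def.2 (by simp only; omega)
    rw [Equiv.trans_apply, hμπ i hik, hprev i hik]
    beta_reduce
    rw [histList_take Γ π (hik.trans (Fin.mk_le_mk.2 k.le_succ))]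

lemma dealer_histList [Nonempty P] (π : Fin (Fintype.card P) ≃ P) (j : Fin (Fintype.card P)) :
    dealer Γ (histList Γ π j) = dealerOrder Γ (histList Γ π j) j := by
  simp [dealer, histList_length, Nat.mod_eq_of_lt j.2]

lemma FullySymmetric.exists_isAutomorphism_dealer [Nonempty P] (hΓ : FullySymmetric Γ)
    (π : Fin (Fintype.card P) ≃ P) :
    ∃ μ : Equiv.Perm P, Γ.IsAutomorphism μ ∧ (fun p => dealer Γ (histList Γ π (π.symm p))) = μ := by
  have hpos : 0 < Fintype.card P := Fintype.card_pos
  have hlast : ∀ i : Fin (Fintype.card P), i ≤ ⟨Fintype.card P - 1, by omega⟩ :=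
    fun i => Fin.le_def.2 (by simp only; omega)
  obtain ⟨hsame, hprev⟩ := hΓ.dealerOrder_histList π _
  obtain ⟨μ, hμ, hμπ⟩ := hΓ.exists_isAutomorphism_of_histList_eq hsame.symm
  refine ⟨μ, hμ, funext fun p => ?_⟩
  rw [dealer_histList, ← hprev _ (hlast _), ← hμπ _ (hlast _), Equiv.apply_symm_apply]

end Dealer

section Complexity

variable [Fintype P] {Γ : AccessStructure P}

def Scheme.toOnline (𝒮 : Scheme P) (D : List (Finset (Finset ℕ)) → P) : OnlineScheme P :=
  { 𝒮 with Idx := P, ShT := 𝒮.Sh, shFin := 𝒮.shFin, ξ := 𝒮.sh, D := D }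

lemma FullySymmetric.toOnline_dealer_realizes [Nonempty P] (hΓ : FullySymmetric Γ)
    {𝒮 : Scheme P} (h𝒮 : 𝒮.Realizes Γ) : (𝒮.toOnline (dealer Γ)).Realizes Γ := fun π => by
  obtain ⟨μ, hμ, hdealer⟩ := hΓ.exists_isAutomorphism_dealer π
  change (𝒮.relabel fun p => dealer Γ (histList Γ π (π.symm p))).Realizes Γ
  rw [hdealer]
  exact h𝒮.relabel hμ

lemma FullySymmetric.oC_le_sigmaC (hΓ : FullySymmetric Γ) : oC Γ ≤ sigmaC Γ := by
  have := Γ.nonempty_participants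
  exact le_iInf₂ fun 𝒮 h𝒮 => iInf₂_le (𝒮.toOnline (dealer Γ)) (hΓ.toOnline_dealer_realizes h𝒮)

lemma OnlineScheme.complexity_toScheme_le (𝒪 : OnlineScheme P) (Γ : AccessStructure P)
    (π : Fin (Fintype.card P) ≃ P) : (𝒪.toScheme Γ π).complexity ≤ 𝒪.complexity :=
  ENNReal.div_le_div_right
    (iSup_le fun _ => le_iSup (fun α => ENNReal.ofReal (H 𝒪.μ (𝒪.ξ α))) _) _

lemma sigmaC_le_oC (Γ : AccessStructure P) : sigmaC Γ ≤ oC Γ :=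
  le_iInf₂ fun 𝒪 h𝒪 => (iInf₂_le (𝒪.toScheme Γ _) (h𝒪 (Fintype.equivFin P).symm)).trans
    (𝒪.complexity_toScheme_le Γ _)

end Complexity

/-- Claim 4.1. For a fully symmetric access structure the
on-line and off-line complexities coincide. -/
theorem statement10 {P : Type} [Fintype P] [DecidableEq P]
    (Γ : AccessStructure P) (h : FullySymmetric Γ) :
    oC Γ = sigmaC Γ :=
  le_antisymm h.oC_le_sigmaC (sigmaC_le_oC Γ)

end

end OnlineSecretSharing
end
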